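/- Let H be an r-uniform hypergraph and let s be an integer with 1 ≤ s ≤ r/2 such that every s-element subset of V is contained in some edge of H. Then 2 is an eigenvalue of the s-th Laplacian L^(s) of H if and only if r = 2s and G^(s) has a connected component which is bipartite, i.e. a connected component whose vertex set can be partitioned into two parts L and R with w(x,y) = 0 whenever x,y ∈ L or x,y ∈ R. -/

import Mathlib

open Matrix Polynomial

noncomputable section

/-- The degree of a vertex in a weighted graph with weight function `w`. -/
def wdeg {m : Type*} [Fintype m] (w : m → m → ℝ) (x : m) : ℝ := ∑ y, w x y

/-- The diagonal matrix `T^{-1/2}` of a weighted graph. -/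
def invSqrtT {m : Type*} [Fintype m] [DecidableEq m] (w : m → m → ℝ) : Matrix m m ℝ :=
  Matrix.diagonal fun x => (Real.sqrt (wdeg w x))⁻¹

/-- The (normalized) Laplacian `I - T^{-1/2} A T^{-1/2}` of a weighted graph. -/
def wLap {m : Type*} [Fintype m] [DecidableEq m] (w : m → m → ℝ) : Matrix m m ℝ :=
  1 - invSqrtT w * Matrix.of w * invSqrtT w

/-- The volume of a set of vertices of a weighted graph. -/
def wvol {m : Type*} [Fintype m] (w : m → m → ℝ) (X : Finset m) : ℝ := ∑ x ∈ X, wdeg w x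

/-- `μ` lists the eigenvalues of the square matrix `M` (with multiplicity)
in non-decreasing order. -/
def IsEigenSeq {m : Type*} [Fintype m] [DecidableEq m] (M : Matrix m m ℝ) {n : ℕ}
    (μ : Fin n → ℝ) : Prop :=
  Monotone μ ∧ M.charpoly = ∏ i, (X - C (μ i))

/-- The underlying simple graph of a weighted graph: vertices are adjacent when the
weight between them is positive (for a symmetric weight with zero diagonal this is
the usual adjacency). -/
def wGraph {m : Type*} (w : m → m → ℝ) : SimpleGraph m where
  Adj x y := x ≠ y ∧ 0 < w x y ∧ 0 < w y x
  symm := ⟨fun _ _ ⟨h1, h2, h3⟩ => ⟨h1.symm, h3, h2⟩⟩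
  loopless := ⟨fun _ h => h.1 rfl⟩

/-- The set `V^(s)` of ordered `s`-tuples of distinct vertices of `V`. -/
abbrev Vtup (V : Type*) (s : ℕ) := {f : Fin s → V // Function.Injective f}

/-- The set `[x]` of coordinates of an ordered tuple `x`. -/
def tset {V : Type*} [DecidableEq V] {s : ℕ} (x : Vtup V s) : Finset V :=
  Finset.univ.image x.val

/-- The degree of a vertex subset `S` in the hypergraph `H`, i.e. the number of
edges of `H` containing `S`. -/
def hdeg {V : Type*} [DecidableEq V] (H : Finset (Finset V)) (S : Finset V) : ℕ :=
  (H.filter fun F => S ⊆ F).card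

/-- The weight function of the weighted graph `G^(s)` on `V^(s)` associated with the
hypergraph `H`: when `[x]` and `[y]` are disjoint, `w(x,y)` is the number of edges of `H`
containing `[x] ∪ [y]`, and `w(x,y) = 0` otherwise. -/
def hw {V : Type*} [Fintype V] [DecidableEq V] (H : Finset (Finset V)) (s : ℕ)
    (x y : Vtup V s) : ℝ :=
  if Disjoint (tset x) (tset y) then
    ((H.filter fun F => tset x ∪ tset y ⊆ F).card : ℝ)
  else 0

/-!
Writing `v = T^{1/2} u`, the equation `L v = 2 v` becomes `A u = -T u`. Summing
`w(x,y) (u x + u y)²` over all pairs shows that this holds exactly when `u` changes sign along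
every edge of `G^(s)`, and a nonzero such `u` is `±c` on the two sides of a bipartite component.
When `r > 2s` no such `u` exists: order `2s + 1` vertices of an edge `F ⊇ [x]` so that `x` comes
first; their cyclic windows of length `s` form a closed walk of odd length `2s + 1` through `x`
in `G^(s)`, along which a sign-alternating `u` must vanish.
-/

section SignAlternating

variable {m : Type*} {w : m → m → ℝ} {u : m → ℝ}

def SignAlternating (w : m → m → ℝ) (u : m → ℝ) : Prop :=
  ∀ x y, w x y ≠ 0 → u y = -u x

def HasBipartiteComponent (w : m → m → ℝ) : Prop :=
  ∃ x₀ : m, ∃ L R : Set m,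
    Disjoint L R ∧ L ∪ R = {y | (wGraph w).Reachable x₀ y} ∧
    (∀ a ∈ L, ∀ b ∈ L, w a b = 0) ∧ (∀ a ∈ R, ∀ b ∈ R, w a b = 0)

lemma wGraph_adj_of_ne_zero (hsymm : ∀ x y, w x y = w y x) (hnn : ∀ x y, 0 ≤ w x y)
    (hself : ∀ x, w x x = 0) {x y : m} (hxy : w x y ≠ 0) : (wGraph w).Adj x y := by
  have hpos : 0 < w x y := (hnn x y).lt_of_ne' hxy
  exact ⟨fun h => hxy (h ▸ hself x), hpos, hsymm x y ▸ hpos⟩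

lemma SignAlternating.eq_or_eq_neg_of_reachable (hu : SignAlternating w u) {a b : m}
    (hab : (wGraph w).Reachable a b) : u b = u a ∨ u b = -u a := by
  obtain ⟨p⟩ := hab
  induction p with
  | nil => exact Or.inl rfl
  | cons hadj _ ih =>
    have hstep := hu _ _ hadj.2.1.ne'
    rcases ih with h | h
    · exact Or.inr (h.trans hstep)
    · exact Or.inl (by rw [h, hstep, neg_neg])

lemma SignAlternating.eq_zero_of_odd_cycle (hu : SignAlternating w u) {n : ℕ} [NeZero n]
    (hn : Odd n) (T : Fin n → m) (c : Fin n) (hT : ∀ a, w (T a) (T (a + c)) ≠ 0) :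
    u (T 0) = 0 := by
  have hwalk : ∀ k : ℕ, u (T (k • c)) = (-1) ^ k * u (T 0) := by
    intro k
    induction k with
    | zero => simp
    | succ k ih => rw [succ_nsmul, hu _ _ (hT _), ih, pow_succ]; ring
  have hclosed := hwalk (Fintype.card (Fin n))
  rw [card_nsmul_eq_zero, Fintype.card_fin, hn.neg_one_pow] at hclosed
  linarith

lemma SignAlternating.hasBipartiteComponent (hu : SignAlternating w u) (hu0 : u ≠ 0) :
    HasBipartiteComponent w := by
  obtain ⟨x₀, hx₀ : u x₀ ≠ 0⟩ := Function.ne_iff.1 hu0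
  refine ⟨x₀, {y | (wGraph w).Reachable x₀ y ∧ u y = u x₀},
    {y | (wGraph w).Reachable x₀ y ∧ u y = -u x₀}, ?_, ?_, ?_, ?_⟩
  · refine Set.disjoint_left.2 fun y hL hR => hx₀ ?_
    linarith [hL.2, hR.2]
  · ext y
    simp only [Set.mem_union, Set.mem_ofPred_eq, ← and_or_left, and_iff_left_iff_imp]
    exact hu.eq_or_eq_neg_of_reachable
  all_goals
    rintro a ⟨-, ha⟩ b ⟨-, hb⟩
    by_contra h
    exact hx₀ (by linarith [hu a b h])

lemma HasBipartiteComponent.exists_signAlternating (h : HasBipartiteComponent w)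
    (hsymm : ∀ x y, w x y = w y x) (hnn : ∀ x y, 0 ≤ w x y) (hself : ∀ x, w x x = 0) :
    ∃ u ≠ 0, SignAlternating w u := by
  classical
  obtain ⟨x₀, L, R, hLR, hcomp, hL, hR⟩ := h
  have hmem : ∀ {x y}, w x y ≠ 0 → (x ∈ L ∪ R ↔ y ∈ L ∪ R) := fun hxy => by
    have hadj := wGraph_adj_of_ne_zero hsymm hnn hself hxy
    rw [hcomp]
    exact ⟨fun hx => hx.trans hadj.reachable, fun hy => hy.trans hadj.symm.reachable⟩
  refine ⟨fun y => if y ∈ L then 1 else if y ∈ R then -1 else 0, ?_, ?_⟩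
  · have hx₀ : x₀ ∈ L ∪ R := hcomp ▸ SimpleGraph.Reachable.refl x₀
    intro h
    have h₀ := congrFun h x₀
    rcases hx₀ with hx₀L | hx₀R
    · simp [hx₀L] at h₀
    · simp [Set.disjoint_right.1 hLR hx₀R, hx₀R] at h₀
  · intro x y hxy
    by_cases hx : x ∈ L ∪ R
    · have hy := (hmem hxy).1 hx
      rcases hx with hxL | hxR
      · have hyL : y ∉ L := fun hyL => hxy (hL x hxL y hyL)
        simp [hxL, hyL, hy.resolve_left hyL]
      · have hyR : y ∉ R := fun hyR => hxy (hR x hxR y hyR)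
        simp [Set.disjoint_right.1 hLR hxR, hxR, hy.resolve_right hyR]
    · have hy : y ∉ L ∪ R := fun hy => hx ((hmem hxy).2 hy)
      simp only [Set.mem_union, not_or] at hx hy
      simp [hx.1, hx.2, hy.1, hy.2]

end SignAlternating

section Laplacian

variable {m : Type*} [Fintype m] {w : m → m → ℝ} {u : m → ℝ}

lemma SignAlternating.sum_mul_eq_neg_wdeg_mul (hu : SignAlternating w u) (x : m) :
    ∑ y, w x y * u y = -(wdeg w x * u x) := by
  rw [wdeg, Finset.sum_mul, ← Finset.sum_neg_distrib]
  refine Finset.sum_congr rfl fun y _ => ?_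
  by_cases h : w x y = 0
  · simp [h]
  · rw [hu x y h]; ring

lemma signAlternating_of_sum_mul_eq_neg_wdeg_mul (hsymm : ∀ x y, w x y = w y x)
    (hnn : ∀ x y, 0 ≤ w x y) (h : ∀ x, ∑ y, w x y * u y = -(wdeg w x * u x)) :
    SignAlternating w u := by
  have hdeg : ∀ x, ∑ y, w x y * u x ^ 2 = wdeg w x * u x ^ 2 := fun x => by
    rw [wdeg, Finset.sum_mul]
  -- the quadratic form `∑ w x y (u x + u y)²` of the signless Laplacian vanishes at `u`
  have hzero : ∑ x, ∑ y, w x y * (u x + u y) ^ 2 = 0 := calc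
    _ = ∑ x, ∑ y, w x y * u x ^ 2 + ∑ y, ∑ x, w x y * u y ^ 2
          + 2 * ∑ x, u x * ∑ y, w x y * u y := by
      rw [Finset.sum_comm (f := fun y x => w x y * u y ^ 2)]
      simp only [Finset.mul_sum, ← Finset.sum_add_distrib]
      refine Finset.sum_congr rfl fun x _ => Finset.sum_congr rfl fun y _ => ?_
      ring
    _ = 0 := by
      have hcol : ∀ y, ∑ x, w x y * u y ^ 2 = wdeg w y * u y ^ 2 := fun y => by
        simp only [hsymm _ y, hdeg]
      have hcross : ∑ x, u x * -(wdeg w x * u x) = -∑ x, wdeg w x * u x ^ 2 := by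
        rw [← Finset.sum_neg_distrib]
        exact Finset.sum_congr rfl fun x _ => by ring
      simp only [hdeg, hcol, h, hcross]
      ring
  have hnn' : ∀ x y, 0 ≤ w x y * (u x + u y) ^ 2 := fun x y =>
    mul_nonneg (hnn x y) (sq_nonneg _)
  intro x y hxy
  have hrow := (Fintype.sum_eq_zero_iff_of_nonneg fun x => Finset.sum_nonneg
    fun y _ => hnn' x y).1 hzero
  have hxy0 := congrFun ((Fintype.sum_eq_zero_iff_of_nonneg (hnn' x)).1 (congrFun hrow x)) y
  have := pow_eq_zero_iff (n := 2) two_ne_zero |>.1 ((mul_eq_zero.1 hxy0).resolve_left hxy)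
  linarith

variable [DecidableEq m]

lemma wLap_mulVec_apply (v : m → ℝ) (x : m) :
    (wLap w *ᵥ v) x =
      v x - (√(wdeg w x))⁻¹ * ∑ y, w x y * ((√(wdeg w y))⁻¹ * v y) := by
  simp only [wLap, sub_mulVec, one_mulVec, Pi.sub_apply, invSqrtT, ← mulVec_mulVec,
    mulVec_diagonal]
  congr 2
  exact Finset.sum_congr rfl fun y _ => congrArg (w x y * ·) (mulVec_diagonal _ _ y)

lemma wLap_mulVec_eq_two_smul_iff (hd : ∀ x, 0 < wdeg w x) (v : m → ℝ) :
    wLap w *ᵥ v = (2 : ℝ) • v ↔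
      ∀ x, ∑ y, w x y * ((√(wdeg w y))⁻¹ * v y) =
        -(wdeg w x * ((√(wdeg w x))⁻¹ * v x)) := by
  refine funext_iff.trans (forall_congr' fun x => ?_)
  have hc : √(wdeg w x) ^ 2 = wdeg w x := Real.sq_sqrt (hd x).le
  have hc0 : √(wdeg w x) ≠ 0 := (Real.sqrt_pos.2 (hd x)).ne'
  rw [wLap_mulVec_apply, Pi.smul_apply, smul_eq_mul]
  set c := √(wdeg w x)
  set S := ∑ y, w x y * ((√(wdeg w y))⁻¹ * v y)
  rw [← hc]
  constructor <;> intro h <;> field_simp at h ⊢ <;> linarith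

lemma exists_wLap_eigen_two_iff (hsymm : ∀ x y, w x y = w y x) (hnn : ∀ x y, 0 ≤ w x y)
    (hd : ∀ x, 0 < wdeg w x) :
    (∃ v ≠ 0, wLap w *ᵥ v = (2 : ℝ) • v) ↔ ∃ u ≠ 0, SignAlternating w u := by
  have hc0 : ∀ x, √(wdeg w x) ≠ 0 := fun x => (Real.sqrt_pos.2 (hd x)).ne'
  constructor
  · rintro ⟨v, hv0, hv⟩
    refine ⟨fun y => (√(wdeg w y))⁻¹ * v y, fun hu0 => hv0 (funext fun y => ?_),
      signAlternating_of_sum_mul_eq_neg_wdeg_mul hsymm hnn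
        ((wLap_mulVec_eq_two_smul_iff hd v).1 hv)⟩
    simpa [hc0] using congrFun hu0 y
  · rintro ⟨u, hu0, hu⟩
    refine ⟨fun y => √(wdeg w y) * u y, fun hv0 => hu0 (funext fun y => ?_), ?_⟩
    · simpa [hc0] using congrFun hv0 y
    · rw [wLap_mulVec_eq_two_smul_iff hd]
      simpa only [inv_mul_cancel_left₀ (hc0 _)] using hu.sum_mul_eq_neg_wdeg_mul

end Laplacian

section Hypergraph

open Finset

variable {V : Type*} {s : ℕ}

def enumTuple (B : Finset V) (hB : B.card = s) : Vtup V s :=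
  ⟨fun i => B.equivFin.symm (Fin.cast hB.symm i),
    Subtype.val_injective.comp (B.equivFin.symm.injective.comp (Fin.cast_injective _))⟩

lemma enumTuple_mem (B : Finset V) (hB : B.card = s) (i : Fin s) : (enumTuple B hB).1 i ∈ B :=
  (B.equivFin.symm _).2

variable [DecidableEq V]

lemma mem_tset {x : Vtup V s} {v : V} : v ∈ tset x ↔ ∃ i, x.1 i = v := by
  simp [tset]

lemma card_tset (x : Vtup V s) : (tset x).card = s := by
  rw [tset, card_image_of_injective _ x.2, card_univ, Fintype.card_fin]

lemma tset_enumTuple (B : Finset V) (hB : B.card = s) : tset (enumTuple B hB) = B := by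
  refine eq_of_subset_of_card_le (fun v hv => ?_) (by rw [card_tset, hB])
  obtain ⟨i, rfl⟩ := mem_tset.1 hv
  exact enumTuple_mem B hB i

section Window

variable {n : ℕ} {f : Fin n → V} (hf : Function.Injective f) (hsn : s ≤ n)

def cyclicWindow (a : Fin n) : Vtup V s :=
  ⟨fun i => f (a + Fin.castLE hsn i),
    hf.comp ((add_right_injective a).comp (Fin.castLE_injective hsn))⟩

lemma tset_cyclicWindow_subset {F : Finset V} (hfF : ∀ i, f i ∈ F) (a : Fin n) :
    tset (cyclicWindow hf hsn a) ⊆ F := fun _ hv => by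
  obtain ⟨i, rfl⟩ := mem_tset.1 hv
  exact hfF _

lemma disjoint_tset_cyclicWindow (h2s : 2 * s < n) (a : Fin n) :
    Disjoint (tset (cyclicWindow hf hsn a))
      (tset (cyclicWindow hf hsn (a + ⟨s, by omega⟩))) := by
  refine disjoint_left.2 fun v hv hv' => ?_
  obtain ⟨i, rfl⟩ := mem_tset.1 hv
  obtain ⟨j, hj⟩ := mem_tset.1 hv'
  have hij := congrArg Fin.val (add_left_cancel ((add_assoc a _ _).symm.trans (hf hj)))
  rw [Fin.val_add, Fin.val_castLE, Fin.val_castLE, Fin.val_mk, Nat.mod_eq_of_lt (by omega)] at hij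
  omega

end Window

variable [Fintype V]

lemma hw_nonneg (H : Finset (Finset V)) (x y : Vtup V s) : 0 ≤ hw H s x y := by
  unfold hw; split <;> positivity

lemma hw_symm (H : Finset (Finset V)) (x y : Vtup V s) : hw H s x y = hw H s y x := by
  simp only [hw, disjoint_comm, union_comm]

lemma hw_self (H : Finset (Finset V)) (hs : 1 ≤ s) (x : Vtup V s) : hw H s x x = 0 := by
  have hx : x.1 ⟨0, hs⟩ ∈ tset x := mem_tset.2 ⟨_, rfl⟩
  rw [hw, if_neg fun h => disjoint_left.1 h hx hx]

lemma hw_pos_of_mem {H : Finset (Finset V)} {x y : Vtup V s} {F : Finset V} (hF : F ∈ H)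
    (hd : Disjoint (tset x) (tset y)) (hsub : tset x ∪ tset y ⊆ F) : 0 < hw H s x y := by
  rw [hw, if_pos hd, Nat.cast_pos, card_pos]
  exact ⟨F, mem_filter.2 ⟨hF, hsub⟩⟩

lemma wdeg_hw_pos {r : ℕ} {H : Finset (Finset V)} (hs2 : 2 * s ≤ r)
    (hunif : ∀ F ∈ H, F.card = r) (hcov : ∀ S : Finset V, S.card = s → ∃ F ∈ H, S ⊆ F)
    (x : Vtup V s) : 0 < wdeg (hw H s) x := by
  obtain ⟨F, hF, hxF⟩ := hcov (tset x) (card_tset x)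
  have hcard : s ≤ (F \ tset x).card := by
    rw [card_sdiff_of_subset hxF, hunif F hF, card_tset]; omega
  obtain ⟨B, hBF, hB⟩ := exists_subset_card_eq hcard
  have hy := tset_enumTuple B hB
  have hpos : 0 < hw H s x (enumTuple B hB) := by
    refine hw_pos_of_mem hF ?_ ?_ <;> rw [hy]
    · exact disjoint_sdiff.mono_right hBF
    · exact union_subset hxF (hBF.trans sdiff_subset)
  exact hpos.trans_le (single_le_sum (fun z _ => hw_nonneg H x z) (mem_univ _))

lemma SignAlternating.eq_zero_of_two_mul_lt {r : ℕ} {H : Finset (Finset V)} {u : Vtup V s → ℝ}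
    (hu : SignAlternating (hw H s) u) (hr : 2 * s < r) (hunif : ∀ F ∈ H, F.card = r)
    (hcov : ∀ S : Finset V, S.card = s → ∃ F ∈ H, S ⊆ F) (x₀ : Vtup V s) :
    u x₀ = 0 := by
  obtain ⟨F, hF, hx₀F⟩ := hcov (tset x₀) (card_tset x₀)
  have hcard : s + 1 ≤ (F \ tset x₀).card := by
    rw [card_sdiff_of_subset hx₀F, hunif F hF, card_tset]; omega
  obtain ⟨B, hBF, hB⟩ := exists_subset_card_eq hcard
  let f : Fin (s + (s + 1)) → V := Fin.append x₀.1 (enumTuple B hB).1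
  have hfF : ∀ i, f i ∈ F := Fin.addCases
    (fun i => by simpa [f] using hx₀F (mem_tset.2 ⟨i, rfl⟩))
    (fun j => by simpa [f] using sdiff_subset (hBF (enumTuple_mem B hB j)))
  have hf : Function.Injective f := Fin.append_injective_iff.2 ⟨x₀.2, (enumTuple B hB).2,
    fun i j h => (mem_sdiff.1 (hBF (h ▸ enumTuple_mem B hB j))).2 (mem_tset.2 ⟨i, rfl⟩)⟩
  have hsn : s ≤ s + (s + 1) := by omega
  have hx₀ : cyclicWindow hf hsn 0 = x₀ := Subtype.ext (funext fun i => by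
    change f (0 + Fin.castLE hsn i) = x₀.1 i
    rw [zero_add]
    exact Fin.append_left _ _ i)
  have hodd : Odd (s + (s + 1)) := ⟨s, by ring⟩
  have hcycle : ∀ a,
      hw H s (cyclicWindow hf hsn a) (cyclicWindow hf hsn (a + ⟨s, by omega⟩)) ≠ 0 := fun a =>
    have hsub := tset_cyclicWindow_subset hf hsn hfF
    (hw_pos_of_mem hF (disjoint_tset_cyclicWindow hf hsn (by omega) a)
      (union_subset (hsub _) (hsub _))).ne'
  rw [← hx₀]
  exact hu.eq_zero_of_odd_cycle hodd _ _ hcycle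

end Hypergraph

/-- `2` is an eigenvalue of the `s`-th Laplacian `L^(s)` of an
`r`-uniform hypergraph `H` (with every `s`-set covered by an edge) if and only if
`r = 2s` and `G^(s)` has a bipartite connected component. -/
theorem stmt_12 {V : Type*} [Fintype V] [DecidableEq V]
    (r s : ℕ) (hs1 : 1 ≤ s) (hs2 : 2 * s ≤ r)
    (H : Finset (Finset V)) (hunif : ∀ F ∈ H, F.card = r)
    (hcov : ∀ S : Finset V, S.card = s → ∃ F ∈ H, S ⊆ F) :
    (∃ v : Vtup V s → ℝ, v ≠ 0 ∧ wLap (hw H s) *ᵥ v = (2 : ℝ) • v) ↔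
      (r = 2 * s ∧ ∃ x₀ : Vtup V s, ∃ L R : Set (Vtup V s),
        Disjoint L R ∧ L ∪ R = {y | (wGraph (hw H s)).Reachable x₀ y} ∧
        (∀ a ∈ L, ∀ b ∈ L, hw H s a b = 0) ∧
        (∀ a ∈ R, ∀ b ∈ R, hw H s a b = 0)) := by
  change _ ↔ r = 2 * s ∧ HasBipartiteComponent (hw H s)
  rw [exists_wLap_eigen_two_iff (hw_symm H) (hw_nonneg H) (wdeg_hw_pos hs2 hunif hcov)]
  constructor
  · rintro ⟨u, hu0, hu⟩
    refine ⟨(hs2.eq_of_not_lt fun hr => hu0 ?_).symm, hu.hasBipartiteComponent hu0⟩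
    exact funext (hu.eq_zero_of_two_mul_lt hr hunif hcov)
  · rintro ⟨-, hbip⟩
    exact hbip.exists_signAlternating (hw_symm H) (hw_nonneg H) (hw_self H hs1)
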